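/- Let D ∈ M_{k×l}(ℝ) be any non-branching matrix (zero columns allowed). Then the kernel of the linear map ℝ^l → ℝ^k given by D admits a basis consisting of vectors all of whose entries lie in {−1,0,1} and whose supports are pairwise disjoint; in particular these basis vectors are pairwise orthogonal with respect to the standard inner product. -/

import Mathlib

/-!
Call two columns of `D` adjacent when some row is non-zero in both. A row of a non-branching
matrix meeting two distinct columns `a`, `b` reads `±x a ± x b = 0` on the kernel, so `|x|` is
constant on each connected component of the adjacency graph; and since every row only sees one
component, restricting a kernel vector to a component keeps it in the kernel. For every
component on which some kernel vector is non-zero, such a vector restricted to the component and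
normalised at a representative is a `{-1, 0, 1}`-vector. These vectors have disjoint supports, and
they form a basis because evaluation at the representatives is injective on the kernel: a kernel
vector vanishing at all of them vanishes everywhere, `|x|` being constant on components.
-/

open scoped Classical

/-- A real matrix is *non-branching* if all its entries lie in `{-1, 0, 1}` and every
row has at most two non-zero entries. -/
def NonBranching {k l : ℕ} (D : Matrix (Fin k) (Fin l) ℝ) : Prop :=
  (∀ i j, D i j = -1 ∨ D i j = 0 ∨ D i j = 1) ∧
    ∀ i : Fin k, (Finset.univ.filter fun j => D i j ≠ 0).card ≤ 2

open Function Matrix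

theorem sum_mul_eq_zero_of_disjoint_support {ι R : Type*} [Fintype ι]
    [NonUnitalNonAssocSemiring R] {x y : ι → R} (h : Disjoint (support x) (support y)) :
    ∑ j, x j * y j = 0 :=
  Finset.sum_eq_zero fun j _ => by
    by_cases hx : x j = 0
    · rw [hx, zero_mul]
    · rw [not_not.1 (Set.disjoint_left.1 h hx), mul_zero]

section ClassBasis

variable {ι : Type*} (K : Submodule ℝ (ι → ℝ)) (s : Setoid ι)

def StableUnderClassIndicator : Prop :=
  ∀ x ∈ K, ∀ c : Quotient s, {j | Quotient.mk s j = c}.indicator x ∈ K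

def AbsConstOnClasses : Prop :=
  ∀ x ∈ K, ∀ a b, s a b → |x a| = |x b|

def NonvanishingClass : Type _ := {c : Quotient s // ∃ x ∈ K, x c.out ≠ 0}

variable {K s}

namespace NonvanishingClass

noncomputable def vec (t : NonvanishingClass K s) : ι → ℝ :=
  (t.2.choose t.1.out)⁻¹ • {j | Quotient.mk s j = t.1}.indicator t.2.choose

theorem vec_mem (hres : StableUnderClassIndicator K s) (t : NonvanishingClass K s) : t.vec ∈ K :=
  K.smul_mem _ (hres _ t.2.choose_spec.1 _)

theorem vec_eq_zero_of_mk_ne (t : NonvanishingClass K s) {j : ι} (hj : Quotient.mk s j ≠ t.1) :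
    t.vec j = 0 := by
  simp [vec, hj]

theorem support_vec_subset (t : NonvanishingClass K s) :
    support t.vec ⊆ {j | Quotient.mk s j = t.1} :=
  fun _ hj => by_contra (hj ∘ t.vec_eq_zero_of_mk_ne)

theorem pairwise_disjoint_support_vec :
    Pairwise (Disjoint on fun t : NonvanishingClass K s => support t.vec) :=
  fun t u htu => Set.disjoint_left.2 fun _ hjt hju =>
    htu (Subtype.ext ((t.support_vec_subset hjt).symm.trans (u.support_vec_subset hju)))

theorem abs_vec_of_mk_eq (habs : AbsConstOnClasses K s) (t : NonvanishingClass K s) {j : ι}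
    (hj : Quotient.mk s j = t.1) : |t.vec j| = 1 := by
  obtain ⟨hx, hout⟩ := t.2.choose_spec
  have hjout : s j t.1.out := Quotient.exact (hj.trans t.1.out_eq.symm)
  simp only [vec, Pi.smul_apply, Set.indicator_of_mem (s := {j | Quotient.mk s j = t.1}) hj,
    smul_eq_mul, abs_mul, abs_inv, habs _ hx _ _ hjout]
  exact inv_mul_cancel₀ (abs_ne_zero.2 hout)

theorem vec_apply_eq_neg_one_or_zero_or_one (habs : AbsConstOnClasses K s)
    (t : NonvanishingClass K s) (j : ι) : t.vec j = -1 ∨ t.vec j = 0 ∨ t.vec j = 1 := by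
  by_cases hj : Quotient.mk s j = t.1
  · rcases (abs_eq zero_le_one).1 (t.abs_vec_of_mk_eq habs hj) with h | h
    · exact .inr (.inr h)
    · exact .inl h
  · exact .inr (.inl (t.vec_eq_zero_of_mk_ne hj))

theorem vec_apply_out (t u : NonvanishingClass K s) :
    t.vec u.1.out = (Pi.single t 1 : NonvanishingClass K s → ℝ) u := by
  by_cases htu : u = t
  · subst htu
    simp [vec, u.2.choose_spec.2]
  · rw [Pi.single_eq_of_ne htu]
    exact t.vec_eq_zero_of_mk_ne fun h => htu (Subtype.ext (u.1.out_eq ▸ h))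

theorem eq_zero_of_forall_apply_out_eq_zero (habs : AbsConstOnClasses K s)
    {x : ι → ℝ} (hx : x ∈ K) (h : ∀ t : NonvanishingClass K s, x t.1.out = 0) : x = 0 := by
  have hout : ∀ c : Quotient s, x c.out = 0 := fun c => by
    by_cases hc : ∃ y ∈ K, y c.out ≠ 0
    · exact h ⟨c, hc⟩
    · push Not at hc
      exact hc x hx
  funext j
  rw [Pi.zero_apply, ← abs_eq_zero, ← habs x hx _ _ (Quotient.mk_out j), hout, abs_zero]

variable (K s) in
noncomputable def evalOut : K →ₗ[ℝ] NonvanishingClass K s → ℝ :=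
  LinearMap.pi fun t => (LinearMap.proj t.1.out).comp K.subtype

theorem evalOut_vec (hres : StableUnderClassIndicator K s) (t : NonvanishingClass K s) :
    evalOut K s ⟨t.vec, vec_mem hres t⟩ = Pi.single t 1 :=
  funext t.vec_apply_out

theorem evalOut_injective (habs : AbsConstOnClasses K s) : Injective (evalOut K s) := by
  refine (injective_iff_map_eq_zero _).2 fun x hx => Subtype.ext ?_
  exact eq_zero_of_forall_apply_out_eq_zero habs x.2 (congrFun hx)

instance [Finite ι] : Finite (NonvanishingClass K s) := Subtype.finite (α := Quotient s)

theorem evalOut_surjective [Finite ι] (hres : StableUnderClassIndicator K s) :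
    Surjective (evalOut K s) := by
  refine LinearMap.range_eq_top.1 (eq_top_iff.2 ?_)
  rw [← (Pi.basisFun ℝ _).span_eq, Submodule.span_le]
  rintro _ ⟨t, rfl⟩
  exact ⟨_, (evalOut_vec hres t).trans (Pi.basisFun_apply ℝ _ t).symm⟩

noncomputable def basis [Finite ι] (hres : StableUnderClassIndicator K s)
    (habs : AbsConstOnClasses K s) : Module.Basis (NonvanishingClass K s) ℝ K :=
  .ofEquivFun (.ofBijective (evalOut K s) ⟨evalOut_injective habs, evalOut_surjective hres⟩)

theorem coe_basis_apply [Finite ι] (hres : StableUnderClassIndicator K s)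
    (habs : AbsConstOnClasses K s) (t : NonvanishingClass K s) :
    (basis hres habs t : ι → ℝ) = t.vec := by
  simp only [basis, Module.Basis.coe_ofEquivFun, ← evalOut_vec hres t]
  exact congrArg Subtype.val (LinearEquiv.ofBijective_symm_apply_apply _ _)

end NonvanishingClass

theorem exists_pairwise_disjoint_pm_one_basis [Finite ι] (hres : StableUnderClassIndicator K s)
    (habs : AbsConstOnClasses K s) :
    ∃ (n : ℕ) (b : Module.Basis (Fin n) ℝ K),
      (∀ t j, (b t : ι → ℝ) j = -1 ∨ (b t : ι → ℝ) j = 0 ∨ (b t : ι → ℝ) j = 1) ∧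
      Pairwise (Disjoint on fun t => support (b t : ι → ℝ)) := by
  let e := Finite.equivFin (NonvanishingClass K s)
  refine ⟨_, (NonvanishingClass.basis hres habs).reindex e, fun t j => ?_, ?_⟩
  · rw [Module.Basis.reindex_apply, NonvanishingClass.coe_basis_apply]
    exact (e.symm t).vec_apply_eq_neg_one_or_zero_or_one habs j
  · simp only [Module.Basis.reindex_apply, NonvanishingClass.coe_basis_apply]
    exact NonvanishingClass.pairwise_disjoint_support_vec.comp_of_injective e.symm.injective

end ClassBasis

namespace Matrix

variable {m n R : Type*} [Fintype n] [NonUnitalNonAssocSemiring R]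

def ColAdj (D : Matrix m n R) (a b : n) : Prop := ∃ i, D i a ≠ 0 ∧ D i b ≠ 0

theorem mulVec_indicator_eq_zero {D : Matrix m n R} {x : n → R} (hx : D *ᵥ x = 0) {S : Set n}
    (hS : ∀ a b, D.ColAdj a b → a ∈ S → b ∈ S) : D *ᵥ S.indicator x = 0 := by
  funext i
  by_cases hrow : ∃ a ∈ S, D i a ≠ 0
  · obtain ⟨a, haS, ha⟩ := hrow
    have hterm : ∀ j, D i j * S.indicator x j = D i j * x j := fun j => by
      by_cases hj : D i j = 0
      · simp [hj]
      · rw [Set.indicator_of_mem (hS a j ⟨i, ha, hj⟩ haS)]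
    simpa only [mulVec, dotProduct, hterm] using congrFun hx i
  · push Not at hrow
    refine Finset.sum_eq_zero fun j _ => ?_
    by_cases hj : j ∈ S
    · simp [hrow j hj]
    · simp [hj]

theorem mulVec_indicator_class_eq_zero {D : Matrix m n R} {x : n → R} (hx : D *ᵥ x = 0)
    (c : Quotient (Relation.EqvGen.setoid D.ColAdj)) :
    D *ᵥ {j | Quotient.mk _ j = c}.indicator x = 0 :=
  mulVec_indicator_eq_zero hx fun a b hab ha =>
    (Quotient.sound (Relation.EqvGen.rel a b hab)).symm.trans ha

end Matrix

namespace NonBranching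

variable {k l : ℕ} {D : Matrix (Fin k) (Fin l) ℝ}

theorem abs_eq_one (hD : NonBranching D) {i : Fin k} {j : Fin l} (h : D i j ≠ 0) :
    |D i j| = 1 := by
  rcases hD.1 i j with h' | h' | h' <;> simp_all

theorem abs_apply_eq_of_colAdj (hD : NonBranching D) {x : Fin l → ℝ} (hx : D *ᵥ x = 0)
    {a b : Fin l} (hab : D.ColAdj a b) : |x a| = |x b| := by
  obtain ⟨i, ha, hb⟩ := hab
  rcases eq_or_ne a b with rfl | hne
  · rfl
  have hrow : ({j | D i j ≠ 0} : Finset (Fin l)) = {a, b} :=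
    (Finset.eq_of_subset_of_card_le (by simp [Finset.insert_subset_iff, ha, hb])
      ((Finset.card_pair hne).symm ▸ hD.2 i)).symm
  have hsum : D i a * x a + D i b * x b = 0 := by
    rw [← Finset.sum_pair (f := fun j => D i j * x j) hne, ← hrow,
      Finset.sum_filter_of_ne fun _ _ h => left_ne_zero_of_mul h]
    exact congrFun hx i
  calc |x a| = |D i a * x a| := by rw [abs_mul, hD.abs_eq_one ha, one_mul]
    _ = |D i b * x b| := by rw [eq_neg_of_add_eq_zero_left hsum, abs_neg]
    _ = |x b| := by rw [abs_mul, hD.abs_eq_one hb, one_mul]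

theorem abs_apply_eq_of_eqvGen (hD : NonBranching D) {x : Fin l → ℝ} (hx : D *ᵥ x = 0)
    {a b : Fin l} (hab : Relation.EqvGen.setoid D.ColAdj a b) : |x a| = |x b| :=
  Setoid.eqvGen_le (s := Setoid.ker fun j => |x j|)
    (fun _ _ h => hD.abs_apply_eq_of_colAdj hx h) hab

end NonBranching

theorem stmt2 {k l : ℕ} (D : Matrix (Fin k) (Fin l) ℝ) (hD : NonBranching D) :
    ∃ (n : ℕ) (b : Module.Basis (Fin n) ℝ (LinearMap.ker D.mulVecLin)),
      (∀ (t : Fin n) (j : Fin l),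
        (b t : Fin l → ℝ) j = -1 ∨ (b t : Fin l → ℝ) j = 0 ∨ (b t : Fin l → ℝ) j = 1) ∧
      (∀ t₁ t₂ : Fin n, t₁ ≠ t₂ →
        Disjoint {j : Fin l | (b t₁ : Fin l → ℝ) j ≠ 0} {j : Fin l | (b t₂ : Fin l → ℝ) j ≠ 0}) ∧
      (∀ t₁ t₂ : Fin n, t₁ ≠ t₂ →
        ∑ j : Fin l, (b t₁ : Fin l → ℝ) j * (b t₂ : Fin l → ℝ) j = 0) := by
  have hker : ∀ x ∈ LinearMap.ker D.mulVecLin, D *ᵥ x = 0 := fun _ => LinearMap.mem_ker.1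
  obtain ⟨n, b, hpm, hdisj⟩ := exists_pairwise_disjoint_pm_one_basis
    (fun x hx c => mulVec_indicator_class_eq_zero (hker x hx) c)
    (fun x hx _ _ hab => hD.abs_apply_eq_of_eqvGen (hker x hx) hab)
  exact ⟨n, b, hpm, fun _ _ h => hdisj h,
    fun _ _ h => sum_mul_eq_zero_of_disjoint_support (hdisj h)⟩
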